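/- arXiv:2306.11679 — 5 statements merged into one kernel-verified Lean document; each statement's English description precedes it below -/
import Mathlib

section
/- Let J : E → E be a firmly nonexpansive map on a finite-dimensional real inner product space E, defined on all of E, and let B̃ = J⁻¹ − Id be the set-valued operator defined by B̃(x) = {z − x : z ∈ E, J z = x}. Then B̃ is maximally monotone: B̃ is monotone, and whenever a pair (x, u) ∈ E × E satisfies ⟪x − y, u − v⟫ ≥ 0 for every y ∈ E and every v ∈ B̃(y), one has u ∈ B̃(x) (equivalently, J(x + u) = x). In particular J is the resolvent (Id + B̃)⁻¹ of the maximally monotone operator B̃. -/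
open RealInnerProductSpace

/-- If `J : E → E` is firmly nonexpansive (everywhere defined), then `B̃ = J⁻¹ − Id`
is maximally monotone, and `J` is its resolvent: every pair `(x, u)` monotonically
related to the graph of `B̃` satisfies `u ∈ B̃ x`, equivalently `J (x + u) = x`. -/
theorem stmt_2 {E : Type*} [NormedAddCommGroup E] [InnerProductSpace ℝ E]
    [FiniteDimensional ℝ E] (J : E → E)
    (hJ : ∀ x y : E, ‖J x - J y‖ ^ 2 ≤ ⟪x - y, J x - J y⟫)
    (B : E → Set E) (hB : ∀ x : E, B x = {u : E | ∃ z : E, J z = x ∧ u = z - x}) :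
    (∀ x₁ x₂ u₁ u₂ : E, u₁ ∈ B x₁ → u₂ ∈ B x₂ → 0 ≤ ⟪x₁ - x₂, u₁ - u₂⟫) ∧
    (∀ x u : E, (∀ y v : E, v ∈ B y → 0 ≤ ⟪x - y, u - v⟫) →
      u ∈ B x ∧ J (x + u) = x) := by
  constructor
  · intro x₁ x₂ u₁ u₂ h₁ h₂
    rw [hB] at h₁ h₂
    obtain ⟨z₁, hz₁, rfl⟩ := h₁
    obtain ⟨z₂, hz₂, rfl⟩ := h₂
    subst hz₁; subst hz₂
    have key := hJ z₁ z₂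
    have : ⟪J z₁ - J z₂, (z₁ - J z₁) - (z₂ - J z₂)⟫
        = ⟪z₁ - z₂, J z₁ - J z₂⟫ - ‖J z₁ - J z₂‖ ^ 2 := by
      rw [show z₁ - J z₁ - (z₂ - J z₂) = (z₁ - z₂) - (J z₁ - J z₂) by abel,
        inner_sub_right, real_inner_self_eq_norm_sq, real_inner_comm]
    rw [this]
    linarith
  · intro x u h
    have hx : J (x + u) = x := by
      have hv : (x + u) - J (x + u) ∈ B (J (x + u)) := by
        rw [hB]; exact ⟨x + u, rfl, rfl⟩
      have := h (J (x + u)) ((x + u) - J (x + u)) hv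
      have heq : u - ((x + u) - J (x + u)) = -(x - J (x + u)) := by abel
      rw [heq, inner_neg_right, real_inner_self_eq_norm_sq] at this
      have : ‖x - J (x + u)‖ ^ 2 = 0 := by nlinarith [sq_nonneg ‖x - J (x + u)‖]
      have := pow_eq_zero_iff (n := 2) (by norm_num) |>.mp this
      have := norm_eq_zero.mp this
      have := sub_eq_zero.mp this
      exact this.symm
    refine ⟨?_, hx⟩
    rw [hB]
    exact ⟨x + u, hx, by abel⟩
end

section
/- Let C be a nonempty closed convex subset of a finite-dimensional real inner product space E. Then the normal cone operator N_C : E → Set E is maximally monotone: N_C is monotone, and whenever a pair (x, u) ∈ E × E satisfies ⟪x − p, u − v⟫ ≥ 0 for every p ∈ E and every v ∈ N_C(p), one has x ∈ C and u ∈ N_C(x). -/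
open RealInnerProductSpace

/-- The normal cone operator of a nonempty closed convex set is maximally monotone. -/
theorem stmt_5 {E : Type*} [NormedAddCommGroup E] [InnerProductSpace ℝ E]
    [FiniteDimensional ℝ E] (C : Set E) (hne : C.Nonempty) (hcl : IsClosed C)
    (hconv : Convex ℝ C) (N : E → Set E)
    (hN : ∀ x : E, N x = {u : E | x ∈ C ∧ ∀ c ∈ C, ⟪u, c - x⟫ ≤ 0}) :
    (∀ x₁ x₂ u₁ u₂ : E, u₁ ∈ N x₁ → u₂ ∈ N x₂ → 0 ≤ ⟪x₁ - x₂, u₁ - u₂⟫) ∧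
    (∀ x u : E, (∀ p v : E, v ∈ N p → 0 ≤ ⟪x - p, u - v⟫) → x ∈ C ∧ u ∈ N x) := by
  constructor
  · intro x₁ x₂ u₁ u₂ h₁ h₂
    rw [hN] at h₁ h₂
    obtain ⟨hx₁, h₁⟩ := h₁
    obtain ⟨hx₂, h₂⟩ := h₂
    have p₁ := h₁ x₂ hx₂
    have p₂ := h₂ x₁ hx₁
    have : ⟪x₁ - x₂, u₁ - u₂⟫ = -⟪u₁, x₂ - x₁⟫ - ⟪u₂, x₁ - x₂⟫ := by
      rw [real_inner_comm]
      simp [inner_sub_left, inner_sub_right, real_inner_comm]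
      ring
    rw [this]
    linarith
  · intro x u h
    obtain ⟨p, hpC, hp⟩ := exists_norm_eq_iInf_of_complete_convex hne
      (hcl.isComplete) hconv (x + u)
    have hle := (norm_eq_iInf_iff_real_inner_le_zero hconv hpC).mp hp
    have hvN : (x + u - p) ∈ N p := by
      rw [hN]
      exact ⟨hpC, fun c hc => hle c hc⟩
    have h0 := h p (x + u - p) hvN
    have : ⟪x - p, u - (x + u - p)⟫ = -‖x - p‖ ^ 2 := by
      have : u - (x + u - p) = -(x - p) := by abel
      rw [this, inner_neg_right, real_inner_self_eq_norm_sq]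
    rw [this] at h0
    have hxp : x = p := by
      have : ‖x - p‖ = 0 := by nlinarith [norm_nonneg (x - p)]
      have := norm_sub_eq_zero_iff.mp this
      exact this
    subst hxp
    refine ⟨hpC, ?_⟩
    have : u = x + u - x := by abel
    rw [this]
    exact hvN
end

section
/- (Fixed points of the PnP primal-dual iteration solve the monotone inclusion.) Let Φ : ℝ^N → ℝ^M be a linear map with adjoint Φᵀ, y ∈ ℝ^M, ε > 0, and let B₂(y, ε) = {v ∈ ℝ^M : ‖v − y‖ ≤ ε}. Let τ > 0, σ > 0, let J : ℝ^N → ℝ^N be any map, and let B̃ = J⁻¹ − Id be the set-valued operator defined by B̃(x) = {z − x : z ∈ ℝ^N, J z = x}. Suppose (x̂, û) ∈ ℝ^N × ℝ^M is a fixed point of the iteration, i.e., x̂ = J(x̂ − τ Φᵀ û) and û = ũ − σ P_{B₂(y,ε)}(ũ/σ) where ũ = û + σ Φ x̂ and P_{B₂(y,ε)} is the metric projection onto B₂(y, ε). Then Φ x̂ ∈ B₂(y, ε), û ∈ N_{B₂(y,ε)}(Φ x̂), −τ Φᵀ û ∈ B̃(x̂), and consequently 0 ∈ Φᵀ N_{B₂(y,ε)}(Φ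 x̂) + τ⁻¹ • B̃(x̂), i.e., there exist u ∈ N_{B₂(y,ε)}(Φ x̂) and b ∈ B̃(x̂) with Φᵀ u + τ⁻¹ b = 0. -/
set_option maxHeartbeats 1000000


open RealInnerProductSpace

lemma aux_proj_inner_le {m : ℕ} (y z p : EuclideanSpace ℝ (Fin m)) (ε : ℝ)
    (hpC : ‖p - y‖ ≤ ε)
    (hpmin : ∀ w : EuclideanSpace ℝ (Fin m), ‖w - y‖ ≤ ε → ‖z - p‖ ≤ ‖z - w‖) :
    ∀ w : EuclideanSpace ℝ (Fin m), ‖w - y‖ ≤ ε → ⟪z - p, w - p⟫ ≤ 0 := by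
  have hKconv : Convex ℝ (Metric.closedBall y ε) := convex_closedBall y ε
  have hpK : p ∈ Metric.closedBall y ε := by
    rw [Metric.mem_closedBall, dist_eq_norm]; exact hpC
  haveI : Nonempty (Metric.closedBall y ε) := ⟨⟨p, hpK⟩⟩
  have hbdd : BddBelow (Set.range fun w : Metric.closedBall y ε =>
      ‖z - (w : EuclideanSpace ℝ (Fin m))‖) := by
    refine ⟨0, ?_⟩
    rintro _ ⟨w, rfl⟩
    positivity
  have hinf : ‖z - p‖ = ⨅ w : Metric.closedBall y ε, ‖z - (w : EuclideanSpace ℝ (Fin m))‖ := by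
    apply le_antisymm
    · refine le_ciInf fun w => hpmin w ?_
      have := w.2
      rw [Metric.mem_closedBall, dist_eq_norm] at this
      exact this
    · exact ciInf_le hbdd ⟨p, hpK⟩
  have hnc := (norm_eq_iInf_iff_real_inner_le_zero hKconv hpK).mp hinf
  intro w hw
  exact hnc w (by rw [Metric.mem_closedBall, dist_eq_norm]; exact hw)

/-- Fixed points of the PnP primal-dual iteration solve the monotone inclusion
`0 ∈ Φᵀ N_{B₂(y,ε)}(Φ x̂) + τ⁻¹ • B̃(x̂)`. -/
theorem stmt_10 {n m : ℕ}
    (Φ : EuclideanSpace ℝ (Fin n) →ₗ[ℝ] EuclideanSpace ℝ (Fin m))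
    (Φt : EuclideanSpace ℝ (Fin m) →ₗ[ℝ] EuclideanSpace ℝ (Fin n))
    (hadj : ∀ (x : EuclideanSpace ℝ (Fin n)) (u : EuclideanSpace ℝ (Fin m)),
      ⟪Φ x, u⟫ = ⟪x, Φt u⟫)
    (y : EuclideanSpace ℝ (Fin m)) (ε : ℝ) (hε : 0 < ε)
    (τ σ : ℝ) (hτ : 0 < τ) (hσ : 0 < σ)
    (J : EuclideanSpace ℝ (Fin n) → EuclideanSpace ℝ (Fin n))
    (B : EuclideanSpace ℝ (Fin n) → Set (EuclideanSpace ℝ (Fin n)))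
    (hB : ∀ x : EuclideanSpace ℝ (Fin n),
      B x = {b : EuclideanSpace ℝ (Fin n) | ∃ z, J z = x ∧ b = z - x})
    (N : EuclideanSpace ℝ (Fin m) → Set (EuclideanSpace ℝ (Fin m)))
    (hN : ∀ v : EuclideanSpace ℝ (Fin m),
      N v = {u : EuclideanSpace ℝ (Fin m) |
        ‖v - y‖ ≤ ε ∧ ∀ c : EuclideanSpace ℝ (Fin m), ‖c - y‖ ≤ ε → ⟪u, c - v⟫ ≤ 0})
    (xh : EuclideanSpace ℝ (Fin n)) (uh ut p : EuclideanSpace ℝ (Fin m))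
    (hut : ut = uh + σ • Φ xh)
    -- `p` is the metric projection of `ut / σ` onto `B₂(y, ε)`
    (hpC : ‖p - y‖ ≤ ε)
    (hpmin : ∀ w : EuclideanSpace ℝ (Fin m), ‖w - y‖ ≤ ε →
      ‖σ⁻¹ • ut - p‖ ≤ ‖σ⁻¹ • ut - w‖)
    -- fixed-point equations
    (hxfix : xh = J (xh - τ • Φt uh))
    (hufix : uh = ut - σ • p) :
    ‖Φ xh - y‖ ≤ ε ∧
    uh ∈ N (Φ xh) ∧
    -(τ • Φt uh) ∈ B xh ∧
    (∃ (u : EuclideanSpace ℝ (Fin m)) (b : EuclideanSpace ℝ (Fin n)),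
      u ∈ N (Φ xh) ∧ b ∈ B xh ∧ Φt u + τ⁻¹ • b = 0) := by
  -- From the fixed-point equations, Φ xh = p
  have hσp : σ • (Φ xh) = σ • p := by
    have h := hufix
    rw [hut] at h
    have h2 : uh + (σ • Φ xh - σ • p) = uh + 0 := by
      rw [add_zero, add_sub_assoc] at *
      exact h.symm
    have h3 := add_left_cancel h2
    exact sub_eq_zero.mp h3
  have hPhip : Φ xh = p := smul_right_injective _ (ne_of_gt hσ) hσp
  -- Membership in ball
  have h1 : ‖Φ xh - y‖ ≤ ε := by rw [hPhip]; exact hpC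
  -- Normal cone: use projection characterization
  have hnc : ∀ w : EuclideanSpace ℝ (Fin m), ‖w - y‖ ≤ ε → ⟪σ⁻¹ • ut - p, w - p⟫ ≤ 0 :=
    aux_proj_inner_le y (σ⁻¹ • ut) p ε hpC hpmin
  have huhval : σ⁻¹ • ut - p = σ⁻¹ • uh := by
    rw [hufix, smul_sub, smul_smul, inv_mul_cancel₀ (ne_of_gt hσ), one_smul]
  have huhN : uh ∈ N (Φ xh) := by
    rw [hN]
    refine ⟨h1, fun c hc => ?_⟩
    have h4 := hnc c hc
    rw [huhval, real_inner_smul_left] at h4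
    rw [hPhip]
    nlinarith [inv_pos.mpr hσ, h4]
  -- B membership
  have hBmem : -(τ • Φt uh) ∈ B xh := by
    rw [hB]
    exact ⟨xh - τ • Φt uh, hxfix.symm, (sub_sub_cancel_left xh (τ • Φt uh)).symm⟩
  refine ⟨h1, huhN, hBmem, uh, -(τ • Φt uh), huhN, hBmem, ?_⟩
  rw [smul_neg, smul_smul, inv_mul_cancel₀ (ne_of_gt hτ), one_smul, add_neg_cancel]
end

section
/- Let T : E → E be a firmly nonexpansive map on a finite-dimensional real inner product space E whose fixed-point set Fix T = {x : T x = x} is nonempty. Then for every x₀ ∈ E, the Picard iterates x_{k+1} = T(x_k) converge to some x* ∈ Fix T. -/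
open RealInnerProductSpace Filter

/-- Picard iterates of a firmly nonexpansive map with a fixed point converge to a
fixed point (finite-dimensional real inner product space). -/
theorem stmt_12 {E : Type*} [NormedAddCommGroup E] [InnerProductSpace ℝ E]
    [FiniteDimensional ℝ E] (T : E → E)
    (hT : ∀ x y : E, ‖T x - T y‖ ^ 2 ≤ ⟪x - y, T x - T y⟫)
    (hfix : ∃ x : E, T x = x)
    (x₀ : E) (x : ℕ → E) (hx0 : x 0 = x₀) (hxk : ∀ k : ℕ, x (k + 1) = T (x k)) :
    ∃ xs : E, T xs = xs ∧ Filter.Tendsto x Filter.atTop (nhds xs) := by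
  obtain ⟨z, hz⟩ := hfix
  -- key inequality
  have key : ∀ w : E, T w = w → ∀ k : ℕ,
      ‖x (k+1) - w‖ ^ 2 + ‖x (k+1) - x k‖ ^ 2 ≤ ‖x k - w‖ ^ 2 := by
    intro w hw k
    have h1 : ‖x (k+1) - w‖ ^ 2 ≤ ⟪x k - w, x (k+1) - w⟫ := by
      have := hT (x k) w
      rwa [hw, ← hxk] at this
    have h2 : x (k+1) - x k = (x (k+1) - w) - (x k - w) := by abel
    have h3 : ‖(x (k+1) - w) - (x k - w)‖ ^ 2
        = ‖x (k+1) - w‖ ^ 2 - 2 * ⟪x (k+1) - w, x k - w⟫ + ‖x k - w‖ ^ 2 :=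
      norm_sub_sq_real _ _
    rw [h2, h3]
    rw [real_inner_comm] at h1
    linarith
  have anti : ∀ w : E, T w = w → Antitone (fun k => ‖x k - w‖) := by
    intro w hw
    apply antitone_nat_of_succ_le
    intro k
    have := key w hw k
    nlinarith [norm_nonneg (x (k+1) - w), norm_nonneg (x k - w),
      sq_nonneg ‖x (k+1) - x k‖]
  -- convergence of the distance to z
  have hbb : BddBelow (Set.range fun k => ‖x k - z‖) :=
    ⟨0, by rintro r ⟨k, rfl⟩; exact norm_nonneg _⟩
  have hL : Tendsto (fun k => ‖x k - z‖) atTop (nhds (⨅ k, ‖x k - z‖)) :=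
    tendsto_atTop_ciInf (anti z hz) hbb
  set L := ⨅ k, ‖x k - z‖ with hLdef
  have hLsucc : Tendsto (fun k => ‖x (k+1) - z‖) atTop (nhds L) :=
    hL.comp (tendsto_add_atTop_nat 1)
  have hdiff2 : Tendsto (fun k => ‖x (k+1) - x k‖ ^ 2) atTop (nhds 0) := by
    have hb : Tendsto (fun k => ‖x k - z‖ ^ 2 - ‖x (k+1) - z‖ ^ 2) atTop (nhds 0) := by
      have := (hL.pow 2).sub (hLsucc.pow 2)
      simpa using this
    refine squeeze_zero (fun k => sq_nonneg _) (fun k => ?_) hb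
    have := key z hz k
    linarith
  have hdiffn : Tendsto (fun k => ‖x (k+1) - x k‖) atTop (nhds 0) := by
    have := hdiff2.sqrt
    simp only [Real.sqrt_zero] at this
    convert this using 2 with k
    rw [Real.sqrt_sq (norm_nonneg _)]
  have hdiff : Tendsto (fun k => x (k+1) - x k) atTop (nhds 0) :=
    tendsto_zero_iff_norm_tendsto_zero.mpr hdiffn
  -- bounded, extract convergent subsequence
  have hbdd : ∀ k, x k ∈ Metric.closedBall z ‖x 0 - z‖ := by
    intro k
    simp only [Metric.mem_closedBall, dist_eq_norm]
    exact anti z hz (Nat.zero_le k)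
  obtain ⟨xs, -, φ, hφ, hconv⟩ :=
    (isCompact_closedBall z ‖x 0 - z‖).tendsto_subseq hbdd
  have hTcont : Continuous T := by
    have : LipschitzWith 1 T := by
      apply LipschitzWith.of_dist_le_mul
      intro a b
      simp only [dist_eq_norm, NNReal.coe_one, one_mul]
      rcases eq_or_ne (T a - T b) 0 with h | h
      · simp [h]
      · have h1 := hT a b
        have h2 := real_inner_le_norm (a - b) (T a - T b)
        have h3 : 0 < ‖T a - T b‖ := norm_pos_iff.mpr h
        nlinarith
    exact this.continuous
  have hφat : Tendsto φ atTop atTop := hφ.tendsto_atTop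
  have hconv' : Tendsto (fun j => x (φ j + 1)) atTop (nhds xs) := by
    have h1 : Tendsto (fun j => x (φ j + 1) - x (φ j)) atTop (nhds 0) :=
      hdiff.comp hφat
    have := hconv.add h1
    simp only [Function.comp] at this ⊢
    convert this using 2 with j
    · abel
    · rw [add_zero]
  have hTxs : T xs = xs := by
    have h1 : Tendsto (fun j => T (x (φ j))) atTop (nhds (T xs)) :=
      (hTcont.tendsto xs).comp hconv
    have h2 : (fun j => T (x (φ j))) = fun j => x (φ j + 1) := by
      funext j; rw [hxk]
    rw [h2] at h1
    exact tendsto_nhds_unique h1 hconv'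
  refine ⟨xs, hTxs, ?_⟩
  -- full convergence via Fejér monotonicity
  have hbb' : BddBelow (Set.range fun k => ‖x k - xs‖) :=
    ⟨0, by rintro r ⟨k, rfl⟩; exact norm_nonneg _⟩
  have hM : Tendsto (fun k => ‖x k - xs‖) atTop (nhds (⨅ k, ‖x k - xs‖)) :=
    tendsto_atTop_ciInf (anti xs hTxs) hbb'
  have hsub : Tendsto (fun j => ‖x (φ j) - xs‖) atTop (nhds 0) := by
    have h0 : Tendsto (fun j => (x ∘ φ) j - xs) atTop (nhds (xs - xs)) :=
      hconv.sub tendsto_const_nhds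
    rw [sub_self] at h0
    simpa [Function.comp] using h0.norm
  have hsub' : Tendsto (fun j => ‖x (φ j) - xs‖) atTop (nhds (⨅ k, ‖x k - xs‖)) :=
    hM.comp hφat
  have hinf0 : (⨅ k, ‖x k - xs‖) = 0 := tendsto_nhds_unique hsub' hsub
  rw [hinf0] at hM
  exact tendsto_iff_norm_sub_tendsto_zero.mpr hM
end

section
/- (Theorem 1: convergence of the PnP primal-dual algorithm.) Let Φ : ℝ^N → ℝ^M be a linear map with adjoint Φᵀ and operator norm ‖Φ‖, let y ∈ ℝ^M, ε > 0, and let B₂(y, ε) = {v ∈ ℝ^M : ‖v − y‖ ≤ ε}. Let Q : ℝ^N → ℝ^N be a 1-Lipschitz map, let J = (Id + Q)/2, and let B̃ = J⁻¹ − Id be the set-valued operator defined by B̃(x) = {z − x : z ∈ ℝ^N, J z = x}. Let τ > 0 and σ > 0 satisfy τ σ ‖Φ‖² < 1. Assume there exists at least one x̂ ∈ ℝ^N solving the inclusion 0 ∈ Φᵀ N_{B₂(y,ε)}(Φ x̂) + τ⁻¹ • B̃(x̂), i.e., there exist u ∈ N_{B₂(y,ε)}(Φ x̂) and b ∈ B̃(x̂)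 with Φᵀ u + τ⁻¹ b = 0. Then for any initialization (x₀, u₀) ∈ ℝ^N × ℝ^M, the sequence generated by the iterations x_{k+1} = J(x_k − τ Φᵀ u_k), ũ_k = u_k + σ Φ(2 x_{k+1} − x_k), u_{k+1} = ũ_k − σ P_{B₂(y,ε)}(ũ_k / σ), where P_{B₂(y,ε)} is the metric projection onto B₂(y, ε), satisfies: (x_k) converges to a point x* ∈ ℝ^N such that 0 ∈ Φᵀ N_{B₂(y,ε)}(Φ x*) + τ⁻¹ • B̃(x*). -/
/-!
Write `z = (x, u)` and `M = [[τ⁻¹, -Φᵀ], [-Φ, σ⁻¹]]`; `primalDualInner Φ τ σ z w` is `⟪M z, w⟫`,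
and `M` is positive definite because `τ σ ‖Φ‖² < 1`. Since `J` is firmly nonexpansive and
`u_{k+1}` lies in `σ` times the normal cone at `P (ũ_k / σ)`, one step of the algorithm is a
proximal-point step in the `M`-metric: for every solution `w` of the inclusion,
`‖z_{k+1} - w‖²_M + ‖z_k - z_{k+1}‖²_M ≤ ‖z_k - w‖²_M`. Hence the iterates are bounded and their
increments vanish, so a cluster point is a fixed point of the (continuous) iteration map, i.e. a
solution, and Fejér monotonicity with respect to that solution makes the whole sequence converge.
-/

open RealInnerProductSpace Filter Topology

section Fejer

variable {E : Type*} [NormedAddCommGroup E] {V : E → ℝ} {δ : ℝ}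

theorem tendsto_zero_of_mul_norm_sq_le {ι : Type*} {l : Filter ι} (hδ : 0 < δ)
    (hVlow : ∀ z, δ * ‖z‖ ^ 2 ≤ V z) {a : ι → E} (ha : Tendsto (fun i => V (a i)) l (𝓝 0)) :
    Tendsto a l (𝓝 0) := by
  rw [tendsto_zero_iff_norm_tendsto_zero]
  have hlim : Tendsto (fun i => √(V (a i) / δ)) l (𝓝 0) := by
    simpa using (ha.div_const δ).sqrt
  refine squeeze_zero (fun _ => norm_nonneg _) (fun i => ?_) hlim
  refine Real.le_sqrt_of_sq_le ?_
  rw [le_div_iff₀ hδ, mul_comm]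
  exact hVlow (a i)

variable {z : ℕ → E} {w : E}

theorem antitone_of_fejer (hV : ∀ z, 0 ≤ V z)
    (hfejer : ∀ k, V (z (k + 1) - w) + V (z k - z (k + 1)) ≤ V (z k - w)) :
    Antitone fun k => V (z k - w) :=
  antitone_nat_of_succ_le fun k => by linarith [hfejer k, hV (z k - z (k + 1))]

theorem tendsto_sub_succ_of_fejer (hV : ∀ z, 0 ≤ V z)
    (hfejer : ∀ k, V (z (k + 1) - w) + V (z k - z (k + 1)) ≤ V (z k - w)) :
    Tendsto (fun k => V (z k - z (k + 1))) atTop (𝓝 0) := by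
  obtain ⟨L, hL⟩ : ∃ L, Tendsto (fun k => V (z k - w)) atTop (𝓝 L) :=
    ⟨_, tendsto_atTop_ciInf (antitone_of_fejer hV hfejer) ⟨0, by
      rintro _ ⟨k, rfl⟩; exact hV _⟩⟩
  have hgap : Tendsto (fun k => V (z k - w) - V (z (k + 1) - w)) atTop (𝓝 0) := by
    simpa using hL.sub (hL.comp (tendsto_add_atTop_nat 1))
  exact squeeze_zero (fun k => hV _) (fun k => by linarith [hfejer k]) hgap

theorem exists_tendsto_of_fejer [ProperSpace E] {T : E → E} (hT : Continuous T)
    (hVc : Continuous V) (hV0 : V 0 = 0) (hδ : 0 < δ) (hVlow : ∀ z, δ * ‖z‖ ^ 2 ≤ V z)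
    {S : Set E} (hS : S.Nonempty) (hfix : ∀ w, T w = w → w ∈ S)
    (hfejer : ∀ w ∈ S, ∀ z, V (T z - w) + V (z - T z) ≤ V (z - w))
    (hz : ∀ k, z (k + 1) = T (z k)) :
    ∃ w ∈ S, Tendsto z atTop (𝓝 w) := by
  have hV : ∀ z, 0 ≤ V z := fun z => le_trans (by positivity) (hVlow z)
  have hfejer' : ∀ w ∈ S, ∀ k, V (z (k + 1) - w) + V (z k - z (k + 1)) ≤ V (z k - w) :=
    fun w hw k => hz k ▸ hfejer w hw (z k)
  obtain ⟨w₀, hw₀⟩ := hS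
  have hbounded : ∀ k, z k ∈ Metric.closedBall w₀ √(V (z 0 - w₀) / δ) := fun k => by
    rw [mem_closedBall_iff_norm]
    refine Real.le_sqrt_of_sq_le ?_
    rw [le_div_iff₀ hδ, mul_comm]
    exact (hVlow _).trans (antitone_of_fejer hV (hfejer' w₀ hw₀) (Nat.zero_le k))
  obtain ⟨w, -, φ, hφ, hzφ⟩ := (isCompact_closedBall w₀ _).tendsto_subseq hbounded
  have hstep : Tendsto (fun k => z k - z (k + 1)) atTop (𝓝 0) :=
    tendsto_zero_of_mul_norm_sq_le hδ hVlow (tendsto_sub_succ_of_fejer hV (hfejer' w₀ hw₀))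
  have hzφ' : Tendsto (fun j => z (φ j + 1)) atTop (𝓝 w) := by
    simpa using hzφ.sub (hstep.comp hφ.tendsto_atTop)
  have hTw : T w = w := by
    refine tendsto_nhds_unique ?_ hzφ'
    simp only [hz]
    exact (hT.tendsto w).comp hzφ
  have hw : w ∈ S := hfix w hTw
  have hVφ : Tendsto ((fun k => V (z k - w)) ∘ φ) atTop (𝓝 0) := by
    simpa [hV0, Function.comp_def] using (hVc.tendsto 0).comp (tendsto_sub_nhds_zero_iff.mpr hzφ)
  refine ⟨w, hw, tendsto_sub_nhds_zero_iff.mp (tendsto_zero_of_mul_norm_sq_le hδ hVlow ?_)⟩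
  exact (tendsto_iff_tendsto_subseq_of_antitone (antitone_of_fejer hV (hfejer' w hw))
    hφ.tendsto_atTop).mpr hVφ

end Fejer

section InnerProductSpace

variable {E : Type*} [NormedAddCommGroup E] [InnerProductSpace ℝ E]

def IsFirmlyNonexpansive (R : E → E) : Prop :=
  ∀ z z', ‖R z - R z'‖ ^ 2 ≤ ⟪z - z', R z - R z'⟫

theorem IsFirmlyNonexpansive.lipschitzWith {R : E → E} (hR : IsFirmlyNonexpansive R) :
    LipschitzWith 1 R := by
  refine LipschitzWith.of_dist_le_mul fun z z' => ?_
  rw [NNReal.coe_one, one_mul, dist_eq_norm, dist_eq_norm]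
  have h : ‖R z - R z'‖ * ‖R z - R z'‖ ≤ ‖z - z'‖ * ‖R z - R z'‖ := by
    simpa [sq] using (hR z z').trans (real_inner_le_norm _ _)
  rcases (norm_nonneg (R z - R z')).eq_or_lt with h0 | h0
  · exact h0 ▸ norm_nonneg _
  · exact le_of_mul_le_mul_right h h0

theorem isFirmlyNonexpansive_average {Q : E → E} (hQ : ∀ x x', ‖Q x - Q x'‖ ≤ ‖x - x'‖) :
    IsFirmlyNonexpansive fun x => (2 : ℝ)⁻¹ • (x + Q x) := by
  intro z z'
  have hsub : (2 : ℝ)⁻¹ • (z + Q z) - (2 : ℝ)⁻¹ • (z' + Q z') =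
      (2 : ℝ)⁻¹ • ((z - z') + (Q z - Q z')) := by module
  rw [hsub, norm_smul, Real.norm_of_nonneg (by norm_num), mul_pow, norm_add_sq_real,
    inner_smul_right, inner_add_right, real_inner_self_eq_norm_sq]
  nlinarith [mul_self_le_mul_self (norm_nonneg _) (hQ z z')]

def IsMetricProjection (C : Set E) (P : E → E) : Prop :=
  ∀ z, P z ∈ C ∧ ∀ w ∈ C, ‖z - P z‖ ≤ ‖z - w‖

def normalCone (C : Set E) (v : E) : Set E :=
  {u | v ∈ C ∧ ∀ c ∈ C, ⟪u, c - v⟫ ≤ 0}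

theorem smul_mem_normalCone {C : Set E} {u v : E} (hu : u ∈ normalCone C v) {a : ℝ}
    (ha : 0 ≤ a) : a • u ∈ normalCone C v :=
  ⟨hu.1, fun c hc => by
    rw [real_inner_smul_left]; exact mul_nonpos_of_nonneg_of_nonpos ha (hu.2 c hc)⟩

variable {C : Set E} {P : E → E}

theorem IsMetricProjection.sub_mem_normalCone (hC : Convex ℝ C) (hP : IsMetricProjection C P)
    (z : E) : z - P z ∈ normalCone C (P z) := by
  refine ⟨(hP z).1, (norm_eq_iInf_iff_real_inner_le_zero hC (hP z).1).mp ?_⟩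
  have : Nonempty C := ⟨⟨P z, (hP z).1⟩⟩
  exact le_antisymm (le_ciInf fun w => (hP z).2 w w.2)
    (ciInf_le ⟨0, Set.forall_mem_range.2 fun _ => norm_nonneg _⟩ (⟨P z, (hP z).1⟩ : C))

theorem IsMetricProjection.isFirmlyNonexpansive (hC : Convex ℝ C)
    (hP : IsMetricProjection C P) : IsFirmlyNonexpansive P := by
  intro z z'
  have h := (hP.sub_mem_normalCone hC z).2 _ (hP z').1
  have h' := (hP.sub_mem_normalCone hC z').2 _ (hP z).1
  have hsplit : z - z' = (P z - P z') + ((z - P z) - (z' - P z')) := by abel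
  rw [hsplit, inner_add_left, real_inner_self_eq_norm_sq, inner_sub_left]
  have : ⟪z - P z, P z' - P z⟫ = -⟪z - P z, P z - P z'⟫ := by
    rw [← inner_neg_right, neg_sub]
  linarith [real_inner_comm (z - P z) (P z - P z'), real_inner_comm (z' - P z') (P z - P z')]

def inverseSubId (J : E → E) (x : E) : Set E :=
  {b | ∃ z, J z = x ∧ b = z - x}

theorem exists_mem_inverseSubId_add_eq_zero_iff {J : E → E} {τ : ℝ} (hτ : τ ≠ 0) {x g : E} :
    (∃ b ∈ inverseSubId J x, g + τ⁻¹ • b = 0) ↔ J (x - τ • g) = x := by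
  constructor
  · rintro ⟨_, ⟨z, hz, rfl⟩, hb⟩
    have h := congrArg (τ • ·) hb
    simp only [smul_add, smul_smul, mul_inv_cancel₀ hτ, one_smul, smul_zero] at h
    have hz' : z = x - τ • g := by
      rw [← sub_eq_zero, ← h]; abel
    rwa [← hz']
  · intro h
    refine ⟨-(τ • g), ⟨x - τ • g, h, by abel⟩, ?_⟩
    rw [smul_neg, smul_smul, inv_mul_cancel₀ hτ, one_smul, add_neg_cancel]

end InnerProductSpace

theorem exists_pos_mul_sq_add_sq_le {a b c : ℝ} (ha : 0 < a) (hb : 0 < b) (hc : c ^ 2 < a * b) :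
    ∃ δ, 0 < δ ∧ ∀ s t, δ * (s ^ 2 + t ^ 2) ≤ a * s ^ 2 + b * t ^ 2 - 2 * c * s * t := by
  -- `(a + b) (a s² + b t² - 2 c s t) - (a b - c²) (s² + t²) = (a s - c t)² + (b t - c s)²`
  refine ⟨(a * b - c ^ 2) / (a + b), div_pos (by linarith) (by linarith), fun s t => ?_⟩
  rw [div_mul_eq_mul_div, div_le_iff₀ (by linarith)]
  nlinarith [sq_nonneg (a * s - c * t), sq_nonneg (b * t - c * s)]

section PrimalDual

variable {E F : Type*} [NormedAddCommGroup E] [InnerProductSpace ℝ E] [NormedAddCommGroup F]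
  [InnerProductSpace ℝ F] (Φ : E →L[ℝ] F) (Φt : F →L[ℝ] E) (J : E → E) (P : F → F) (τ σ : ℝ)

noncomputable def primalDualStep (z : E × F) : E × F :=
  let x := J (z.1 - τ • Φt z.2)
  let v := z.2 + σ • Φ ((2 : ℝ) • x - z.1)
  (x, v - σ • P (σ⁻¹ • v))

def primalDualSolutions (C : Set F) : Set (E × F) :=
  {z | z.2 ∈ normalCone C (Φ z.1) ∧ J (z.1 - τ • Φt z.2) = z.1}

noncomputable def primalDualInner (z w : E × F) : ℝ :=
  τ⁻¹ * ⟪z.1, w.1⟫ + σ⁻¹ * ⟪z.2, w.2⟫ - ⟪Φ z.1, w.2⟫ - ⟪Φ w.1, z.2⟫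

theorem primalDualInner_add_self (a b : E × F) :
    primalDualInner Φ τ σ (a + b) (a + b) = primalDualInner Φ τ σ a a
      + primalDualInner Φ τ σ b b + 2 * primalDualInner Φ τ σ a b := by
  simp only [primalDualInner, Prod.fst_add, Prod.snd_add, map_add, inner_add_left,
    inner_add_right, real_inner_comm a.1 b.1, real_inner_comm a.2 b.2]
  ring

theorem continuous_primalDualInner_self : Continuous fun z => primalDualInner Φ τ σ z z := by
  unfold primalDualInner; fun_prop

theorem continuous_primalDualStep (hJ : Continuous J) (hP : Continuous P) :
    Continuous (primalDualStep Φ Φt J P τ σ) := by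
  unfold primalDualStep; fun_prop

variable {Φ Φt J P τ σ} {C : Set F}

theorem mem_primalDualSolutions_iff (hτ : τ ≠ 0) {z : E × F} :
    z ∈ primalDualSolutions Φ Φt J τ C ↔
      ∃ b, z.2 ∈ normalCone C (Φ z.1) ∧ b ∈ inverseSubId J z.1 ∧ Φt z.2 + τ⁻¹ • b = 0 := by
  rw [exists_and_left, exists_mem_inverseSubId_add_eq_zero_iff hτ]
  rfl

theorem primalDualInner_step_eq (hadj : ∀ x u, ⟪Φ x, u⟫ = ⟪x, Φt u⟫) (hτ : τ ≠ 0)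
    (x x' xs : E) (u u' us : F) :
    primalDualInner Φ τ σ ((x, u) - (x', u')) ((x', u') - (xs, us)) =
      τ⁻¹ * (⟪(x - τ • Φt u) - (xs - τ • Φt us), x' - xs⟫ - ‖x' - xs‖ ^ 2)
        + ⟪u' - us, σ⁻¹ • (u - u') + Φ ((2 : ℝ) • x' - x) - Φ xs⟫ := by
  simp only [primalDualInner, Prod.mk_sub_mk, inner_sub_left, inner_sub_right, inner_add_right,
    real_inner_smul_right, map_sub, map_smul, ← hadj,
    ← real_inner_self_eq_norm_sq, real_inner_comm]
  field_simp
  ring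

theorem primalDualInner_step_nonneg (hadj : ∀ x u, ⟪Φ x, u⟫ = ⟪x, Φt u⟫)
    (hJ : IsFirmlyNonexpansive J) (hC : Convex ℝ C) (hP : IsMetricProjection C P)
    (hτ : 0 < τ) (hσ : 0 < σ) {w : E × F} (hw : w ∈ primalDualSolutions Φ Φt J τ C)
    (z : E × F) :
    0 ≤ primalDualInner Φ τ σ (z - primalDualStep Φ Φt J P τ σ z)
      (primalDualStep Φ Φt J P τ σ z - w) := by
  obtain ⟨x, u⟩ := z
  obtain ⟨xs, us⟩ := w
  obtain ⟨hus, hxs⟩ := hw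
  set x' := J (x - τ • Φt u)
  set v := u + σ • Φ ((2 : ℝ) • x' - x)
  have hp : P (σ⁻¹ • v) = σ⁻¹ • (u - (v - σ • P (σ⁻¹ • v))) + Φ ((2 : ℝ) • x' - x) := by
    simp only [v]; match_scalars <;> field_simp <;> ring
  have hmono₁ : ‖x' - xs‖ ^ 2 ≤ ⟪(x - τ • Φt u) - (xs - τ • Φt us), x' - xs⟫ := by
    simpa only [hxs] using hJ (x - τ • Φt u) (xs - τ • Φt us)
  -- monotonicity of the normal cone of `C`
  have hmono₂ : 0 ≤ ⟪(v - σ • P (σ⁻¹ • v)) - us, P (σ⁻¹ • v) - Φ xs⟫ := by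
    have h₁ : ⟪v - σ • P (σ⁻¹ • v), Φ xs - P (σ⁻¹ • v)⟫ ≤ 0 := by
      have hv : v - σ • P (σ⁻¹ • v) = σ • (σ⁻¹ • v - P (σ⁻¹ • v)) := by
        match_scalars <;> field_simp
      rw [hv]
      exact (smul_mem_normalCone (hP.sub_mem_normalCone hC _) hσ.le).2 _ hus.1
    have h₂ : ⟪us, P (σ⁻¹ • v) - Φ xs⟫ ≤ 0 := hus.2 _ (hP _).1
    have hneg : ⟪v - σ • P (σ⁻¹ • v), Φ xs - P (σ⁻¹ • v)⟫ =
        -⟪v - σ • P (σ⁻¹ • v), P (σ⁻¹ • v) - Φ xs⟫ := by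
      rw [← inner_neg_right, neg_sub]
    rw [inner_sub_left]
    linarith
  change 0 ≤ primalDualInner Φ τ σ ((x, u) - (x', v - σ • P (σ⁻¹ • v)))
    ((x', v - σ • P (σ⁻¹ • v)) - (xs, us))
  rw [primalDualInner_step_eq hadj hτ.ne', ← hp]
  have := mul_nonneg (inv_nonneg.mpr hτ.le) (sub_nonneg.mpr hmono₁)
  linarith

theorem primalDualInner_fejer (hadj : ∀ x u, ⟪Φ x, u⟫ = ⟪x, Φt u⟫)
    (hJ : IsFirmlyNonexpansive J) (hC : Convex ℝ C) (hP : IsMetricProjection C P)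
    (hτ : 0 < τ) (hσ : 0 < σ) {w : E × F} (hw : w ∈ primalDualSolutions Φ Φt J τ C)
    (z : E × F) :
    primalDualInner Φ τ σ (primalDualStep Φ Φt J P τ σ z - w)
        (primalDualStep Φ Φt J P τ σ z - w)
      + primalDualInner Φ τ σ (z - primalDualStep Φ Φt J P τ σ z)
        (z - primalDualStep Φ Φt J P τ σ z)
      ≤ primalDualInner Φ τ σ (z - w) (z - w) := by
  have hsplit : z - w = (z - primalDualStep Φ Φt J P τ σ z)
      + (primalDualStep Φ Φt J P τ σ z - w) := by abel
  rw [hsplit, primalDualInner_add_self]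
  linarith [primalDualInner_step_nonneg hadj hJ hC hP hτ hσ hw z]

theorem mem_primalDualSolutions_of_step_eq (hC : Convex ℝ C) (hP : IsMetricProjection C P)
    (hσ : 0 < σ) {z : E × F} (hz : primalDualStep Φ Φt J P τ σ z = z) :
    z ∈ primalDualSolutions Φ Φt J τ C := by
  obtain ⟨x, u⟩ := z
  simp only [primalDualStep, Prod.mk.injEq] at hz
  obtain ⟨hx, hu⟩ := hz
  rw [hx, two_smul, add_sub_cancel_right] at hu
  have hPx : P (σ⁻¹ • (u + σ • Φ x)) = Φ x := by
    rw [add_sub_assoc, add_eq_left, sub_eq_zero] at hu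
    exact (smul_right_injective F hσ.ne' hu).symm
  refine ⟨?_, hx⟩
  have hmem := smul_mem_normalCone (hP.sub_mem_normalCone hC (σ⁻¹ • (u + σ • Φ x))) hσ.le
  rw [hPx] at hmem
  rwa [smul_sub, smul_inv_smul₀ hσ.ne', add_sub_cancel_right] at hmem

theorem exists_pos_mul_norm_sq_le_primalDualInner (hτ : 0 < τ) (hσ : 0 < σ)
    (hstep : τ * σ * ‖Φ‖ ^ 2 < 1) :
    ∃ δ, 0 < δ ∧ ∀ z, δ * ‖z‖ ^ 2 ≤ primalDualInner Φ τ σ z z := by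
  have hc : ‖Φ‖ ^ 2 < τ⁻¹ * σ⁻¹ := by
    rw [← mul_inv, ← mul_one (τ * σ)⁻¹, lt_inv_mul_iff₀ (by positivity)]
    linarith
  obtain ⟨δ, hδ, hquad⟩ := exists_pos_mul_sq_add_sq_le (inv_pos.mpr hτ) (inv_pos.mpr hσ) hc
  refine ⟨δ, hδ, fun z => ?_⟩
  have hnorm : ‖z‖ ^ 2 ≤ ‖z.1‖ ^ 2 + ‖z.2‖ ^ 2 := by
    rw [Prod.norm_def]
    rcases max_choice ‖z.1‖ ‖z.2‖ with h | h <;> rw [h] <;> nlinarith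
  have hΦ : ⟪Φ z.1, z.2⟫ ≤ ‖Φ‖ * ‖z.1‖ * ‖z.2‖ :=
    (real_inner_le_norm _ _).trans (by gcongr; exact Φ.le_opNorm _)
  calc δ * ‖z‖ ^ 2 ≤ δ * (‖z.1‖ ^ 2 + ‖z.2‖ ^ 2) := by gcongr
    _ ≤ τ⁻¹ * ‖z.1‖ ^ 2 + σ⁻¹ * ‖z.2‖ ^ 2 - 2 * ‖Φ‖ * ‖z.1‖ * ‖z.2‖ := hquad _ _
    _ ≤ primalDualInner Φ τ σ z z := by
      rw [primalDualInner, real_inner_self_eq_norm_sq, real_inner_self_eq_norm_sq]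
      linarith

end PrimalDual

theorem stmt_13_general {n m : ℕ}
    (Φ : EuclideanSpace ℝ (Fin n) →L[ℝ] EuclideanSpace ℝ (Fin m))
    (Φt : EuclideanSpace ℝ (Fin m) →L[ℝ] EuclideanSpace ℝ (Fin n))
    (hadj : ∀ (x : EuclideanSpace ℝ (Fin n)) (u : EuclideanSpace ℝ (Fin m)),
      ⟪Φ x, u⟫ = ⟪x, Φt u⟫)
    (y : EuclideanSpace ℝ (Fin m)) (ε : ℝ)
    (Q : EuclideanSpace ℝ (Fin n) → EuclideanSpace ℝ (Fin n))
    (hQ : ∀ x x' : EuclideanSpace ℝ (Fin n), ‖Q x - Q x'‖ ≤ ‖x - x'‖)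
    (J : EuclideanSpace ℝ (Fin n) → EuclideanSpace ℝ (Fin n))
    (hJ : ∀ x : EuclideanSpace ℝ (Fin n), J x = (2 : ℝ)⁻¹ • (x + Q x))
    (B : EuclideanSpace ℝ (Fin n) → Set (EuclideanSpace ℝ (Fin n)))
    (hB : ∀ x : EuclideanSpace ℝ (Fin n),
      B x = {b : EuclideanSpace ℝ (Fin n) | ∃ z, J z = x ∧ b = z - x})
    (N : EuclideanSpace ℝ (Fin m) → Set (EuclideanSpace ℝ (Fin m)))
    (hN : ∀ v : EuclideanSpace ℝ (Fin m),
      N v = {u : EuclideanSpace ℝ (Fin m) |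
        ‖v - y‖ ≤ ε ∧ ∀ c : EuclideanSpace ℝ (Fin m), ‖c - y‖ ≤ ε → ⟪u, c - v⟫ ≤ 0})
    (τ σ : ℝ) (hτ : 0 < τ) (hσ : 0 < σ) (hstep : τ * σ * ‖Φ‖ ^ 2 < 1)
    -- existence of a solution to the monotone inclusion
    (hsol : ∃ (xh : EuclideanSpace ℝ (Fin n)) (u : EuclideanSpace ℝ (Fin m))
      (b : EuclideanSpace ℝ (Fin n)),
        u ∈ N (Φ xh) ∧ b ∈ B xh ∧ Φt u + τ⁻¹ • b = 0)
    -- `P` is the metric projection onto `B₂(y, ε)`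
    (P : EuclideanSpace ℝ (Fin m) → EuclideanSpace ℝ (Fin m))
    (hP : ∀ z : EuclideanSpace ℝ (Fin m), ‖P z - y‖ ≤ ε ∧
      ∀ w : EuclideanSpace ℝ (Fin m), ‖w - y‖ ≤ ε → ‖z - P z‖ ≤ ‖z - w‖)
    -- the iterates
    (x : ℕ → EuclideanSpace ℝ (Fin n)) (u ut : ℕ → EuclideanSpace ℝ (Fin m))
    (hxk : ∀ k : ℕ, x (k + 1) = J (x k - τ • Φt (u k)))
    (hutk : ∀ k : ℕ, ut k = u k + σ • Φ ((2 : ℝ) • x (k + 1) - x k))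
    (huk : ∀ k : ℕ, u (k + 1) = ut k - σ • P (σ⁻¹ • ut k)) :
    ∃ xs : EuclideanSpace ℝ (Fin n),
      Filter.Tendsto x Filter.atTop (nhds xs) ∧
      ∃ (us : EuclideanSpace ℝ (Fin m)) (b : EuclideanSpace ℝ (Fin n)),
        us ∈ N (Φ xs) ∧ b ∈ B xs ∧ Φt us + τ⁻¹ • b = 0 := by
  obtain rfl : B = inverseSubId J := funext hB
  set C := Metric.closedBall y ε
  have hC : Convex ℝ C := convex_closedBall y ε
  have hPC : IsMetricProjection C P := fun z => by
    simpa only [C, mem_closedBall_iff_norm] using hP z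
  obtain rfl : N = normalCone C := funext fun v => by
    simp only [hN, normalCone, C, mem_closedBall_iff_norm]
  have hJfirm : IsFirmlyNonexpansive J := by
    rw [funext hJ]; exact isFirmlyNonexpansive_average hQ
  obtain ⟨δ, hδ, hVlow⟩ := exists_pos_mul_norm_sq_le_primalDualInner hτ hσ hstep
  obtain ⟨w, hw, hlim⟩ := exists_tendsto_of_fejer (z := fun k => (x k, u k))
    (continuous_primalDualStep Φ Φt J P τ σ hJfirm.lipschitzWith.continuous
      (hPC.isFirmlyNonexpansive hC).lipschitzWith.continuous)
    (continuous_primalDualInner_self Φ τ σ) (by simp [primalDualInner]) hδ hVlow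
    (let ⟨xh, uh, b, h⟩ := hsol; ⟨(xh, uh), (mem_primalDualSolutions_iff hτ.ne').mpr ⟨b, h⟩⟩)
    (fun _ => mem_primalDualSolutions_of_step_eq hC hPC hσ)
    (fun _ hw => primalDualInner_fejer hadj hJfirm hC hPC hτ hσ hw)
    (fun k => by rw [huk, hutk, hxk]; rfl)
  obtain ⟨b, hb⟩ := (mem_primalDualSolutions_iff hτ.ne').mp hw
  exact ⟨w.1, (continuous_fst.tendsto w).comp hlim, w.2, b, hb⟩

/-- Theorem 1: convergence of the PnP primal-dual algorithm. If `Q` is 1-Lipschitz,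
`J = (Id + Q)/2`, `τσ‖Φ‖² < 1`, and the inclusion
`0 ∈ Φᵀ N_{B₂(y,ε)}(Φ x̂) + τ⁻¹ • B̃(x̂)` has a solution, then the primal iterates of
the PnP primal-dual algorithm converge to a solution of this inclusion. -/
theorem stmt_13 {n m : ℕ}
    (Φ : EuclideanSpace ℝ (Fin n) →L[ℝ] EuclideanSpace ℝ (Fin m))
    (Φt : EuclideanSpace ℝ (Fin m) →L[ℝ] EuclideanSpace ℝ (Fin n))
    (hadj : ∀ (x : EuclideanSpace ℝ (Fin n)) (u : EuclideanSpace ℝ (Fin m)),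
      ⟪Φ x, u⟫ = ⟪x, Φt u⟫)
    (y : EuclideanSpace ℝ (Fin m)) (ε : ℝ) (hε : 0 < ε)
    (Q : EuclideanSpace ℝ (Fin n) → EuclideanSpace ℝ (Fin n))
    (hQ : ∀ x x' : EuclideanSpace ℝ (Fin n), ‖Q x - Q x'‖ ≤ ‖x - x'‖)
    (J : EuclideanSpace ℝ (Fin n) → EuclideanSpace ℝ (Fin n))
    (hJ : ∀ x : EuclideanSpace ℝ (Fin n), J x = (2 : ℝ)⁻¹ • (x + Q x))
    (B : EuclideanSpace ℝ (Fin n) → Set (EuclideanSpace ℝ (Fin n)))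
    (hB : ∀ x : EuclideanSpace ℝ (Fin n),
      B x = {b : EuclideanSpace ℝ (Fin n) | ∃ z, J z = x ∧ b = z - x})
    (N : EuclideanSpace ℝ (Fin m) → Set (EuclideanSpace ℝ (Fin m)))
    (hN : ∀ v : EuclideanSpace ℝ (Fin m),
      N v = {u : EuclideanSpace ℝ (Fin m) |
        ‖v - y‖ ≤ ε ∧ ∀ c : EuclideanSpace ℝ (Fin m), ‖c - y‖ ≤ ε → ⟪u, c - v⟫ ≤ 0})
    (τ σ : ℝ) (hτ : 0 < τ) (hσ : 0 < σ) (hstep : τ * σ * ‖Φ‖ ^ 2 < 1)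
    -- existence of a solution to the monotone inclusion
    (hsol : ∃ (xh : EuclideanSpace ℝ (Fin n)) (u : EuclideanSpace ℝ (Fin m))
      (b : EuclideanSpace ℝ (Fin n)),
        u ∈ N (Φ xh) ∧ b ∈ B xh ∧ Φt u + τ⁻¹ • b = 0)
    -- `P` is the metric projection onto `B₂(y, ε)`
    (P : EuclideanSpace ℝ (Fin m) → EuclideanSpace ℝ (Fin m))
    (hP : ∀ z : EuclideanSpace ℝ (Fin m), ‖P z - y‖ ≤ ε ∧
      ∀ w : EuclideanSpace ℝ (Fin m), ‖w - y‖ ≤ ε → ‖z - P z‖ ≤ ‖z - w‖)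
    -- the iterates
    (x₀ : EuclideanSpace ℝ (Fin n)) (u₀ : EuclideanSpace ℝ (Fin m))
    (x : ℕ → EuclideanSpace ℝ (Fin n)) (u ut : ℕ → EuclideanSpace ℝ (Fin m))
    (hx0 : x 0 = x₀) (hu0 : u 0 = u₀)
    (hxk : ∀ k : ℕ, x (k + 1) = J (x k - τ • Φt (u k)))
    (hutk : ∀ k : ℕ, ut k = u k + σ • Φ ((2 : ℝ) • x (k + 1) - x k))
    (huk : ∀ k : ℕ, u (k + 1) = ut k - σ • P (σ⁻¹ • ut k)) :
    ∃ xs : EuclideanSpace ℝ (Fin n),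
      Filter.Tendsto x Filter.atTop (nhds xs) ∧
      ∃ (us : EuclideanSpace ℝ (Fin m)) (b : EuclideanSpace ℝ (Fin n)),
        us ∈ N (Φ xs) ∧ b ∈ B xs ∧ Φt us + τ⁻¹ • b = 0 :=
  stmt_13_general Φ Φt hadj y ε Q hQ J hJ B hB N hN τ σ hτ hσ hstep hsol P hP x u ut hxk hutk huk
end
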